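/- arXiv:1109.6344 — 13 statements merged into one kernel-verified Lean document; each statement's English description precedes it below -/
import Mathlib

section
/- A revision operator ∗ satisfying RAGM satisfies postulate (P) (for all total preorders ≤ and all nonempty A, B ⊆ V: if min(B, ≤) ∩ A ≠ ∅ then min(B, ≤ ∗ A) ⊆ A) if and only if it satisfies postulate (PR) (for all ≤, all nonempty A, all v ∈ A and w ∉ A: if v ≤ w then v < w in ≤ ∗ A). -/
open Set

variable {V : Type*}

/-- A total preorder: reflexive, transitive and total. -/
def IsTP (r : V → V → Prop) : Prop :=
  Reflexive r ∧ Transitive r ∧ ∀ v w, r v w ∨ r w v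

/-- The strict part of a relation: v < w iff v ≤ w and not w ≤ v. -/
def SRel (r : V → V → Prop) (v w : V) : Prop := r v w ∧ ¬ r w v

/-- min(A, ≤) = the ≤-minimal elements of A. -/
def mins (r : V → V → Prop) (A : Set V) : Set V :=
  {v | v ∈ A ∧ ∀ w ∈ A, r v w}

/-- A and B counteract with respect to r. -/
def Counter (r : V → V → Prop) (A B : Set V) : Prop :=
  mins r A ∩ B = ∅ ∧ mins r B ∩ A = ∅

/-- The restrained revision operator. -/
def restrained (r : V → V → Prop) (A : Set V) : V → V → Prop :=
  fun v w => v ∈ mins r A ∨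
    (w ∉ mins r A ∧ (SRel r v w ∨ (r v w ∧ (v ∈ A ∨ w ∉ A))))

theorem stmt_1 [Fintype V] [Nonempty V]
    (op : (V → V → Prop) → Set V → (V → V → Prop))
    (htp : ∀ r (A : Set V), IsTP r → A.Nonempty → IsTP (op r A))
    (hragm : ∀ r (A : Set V), IsTP r → A.Nonempty →
      mins (op r A) Set.univ = mins r A) :
    ((∀ r (A B : Set V), IsTP r → A.Nonempty → B.Nonempty →
        (mins r B ∩ A).Nonempty → mins (op r A) B ⊆ A)
      ↔
     (∀ r (A : Set V), IsTP r → A.Nonempty →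
        ∀ v ∈ A, ∀ w ∉ A, r v w → SRel (op r A) v w)) := by
  constructor
  · intro hP r A htpr hA v hv w hw hvw
    obtain ⟨hrefl, htrans, htot⟩ := htp r A htpr hA
    have hB : ({v, w} : Set V).Nonempty := ⟨v, by simp⟩
    have hmins : (mins r ({v, w} : Set V) ∩ A).Nonempty := by
      refine ⟨v, ⟨⟨by simp, ?_⟩, hv⟩⟩
      intro u hu
      rcases hu with h | h <;> subst h
      · exact htpr.1 u
      · exact hvw
    have hsub := hP r A {v, w} htpr hA hB hmins
    have hwnot : w ∉ mins (op r A) ({v, w} : Set V) := fun h => hw (hsub h)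
    have hnwv : ¬ op r A w v := by
      intro h
      apply hwnot
      refine ⟨by simp, ?_⟩
      intro u hu
      rcases hu with h' | h' <;> subst h'
      · exact h
      · exact hrefl u
    exact ⟨(htot v w).resolve_right hnwv, hnwv⟩
  · intro hPR r A B htpr hA hB hmin x hx
    by_contra hxA
    obtain ⟨v, hvB, hvA⟩ := hmin
    have hrvx : r v x := hvB.2 x hx.1
    have h := hPR r A htpr hA v hvA x hxA hrvx
    exact h.2 (hx.2 v hvB.1)
end

section
/- For every total preorder ≤ on V and all nonempty subsets A, B ⊆ V: A and B counteract with respect to ≤ (A ⇝ B) if and only if there exist v ∈ A and w ∈ B such that v < x and w < x for every x ∈ min(A ∩ B, ≤). -/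
open Set

variable {V : Type*}

lemma finset_min {V : Type*} {r : V → V → Prop} (h : IsTP r) (s : Finset V)
    (hs : s.Nonempty) : ∃ v ∈ s, ∀ w ∈ s, r v w := by
  classical
  induction s using Finset.induction with
  | empty => simp at hs
  | @insert a s ha ih =>
    rcases s.eq_empty_or_nonempty with rfl | hne
    · exact ⟨a, by simp, by simp [h.1 a]⟩
    · obtain ⟨v, hv, hmin⟩ := ih hne
      rcases h.2.2 v a with hva | hav
      · refine ⟨v, by simp [hv], ?_⟩
        intro w hw
        rcases Finset.mem_insert.1 hw with rfl | hw
        · exact hva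
        · exact hmin w hw
      · refine ⟨a, by simp, ?_⟩
        intro w hw
        rcases Finset.mem_insert.1 hw with rfl | hw
        · exact h.1 w
        · exact h.2.1 hav (hmin w hw)

lemma mins_nonempty {V : Type*} [Fintype V] {r : V → V → Prop} (h : IsTP r)
    (A : Set V) (hA : A.Nonempty) : (mins r A).Nonempty := by
  classical
  obtain ⟨v, hv, hmin⟩ := finset_min h A.toFinset (by
    rwa [Set.toFinset_nonempty])
  exact ⟨v, Set.mem_toFinset.1 hv, fun w hw => hmin w (Set.mem_toFinset.2 hw)⟩

theorem stmt_2 [Fintype V] [Nonempty V] (r : V → V → Prop) (h : IsTP r)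
    (A B : Set V) (hA : A.Nonempty) (hB : B.Nonempty) :
    Counter r A B ↔
      ∃ v ∈ A, ∃ w ∈ B, ∀ x ∈ mins r (A ∩ B), SRel r v x ∧ SRel r w x := by
  constructor
  · rintro ⟨hAB, hBA⟩
    obtain ⟨v, hvA, hvmin⟩ := mins_nonempty h A hA
    obtain ⟨w, hwB, hwmin⟩ := mins_nonempty h B hB
    refine ⟨v, hvA, w, hwB, ?_⟩
    rintro x ⟨⟨hxA, hxB⟩, -⟩
    constructor
    · refine ⟨hvmin x hxA, fun hxv => ?_⟩
      have hxmin : x ∈ mins r A := ⟨hxA, fun y hy => h.2.1 hxv (hvmin y hy)⟩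
      exact Set.eq_empty_iff_forall_notMem.1 hAB x ⟨hxmin, hxB⟩
    · refine ⟨hwmin x hxB, fun hxw => ?_⟩
      have hxmin : x ∈ mins r B := ⟨hxB, fun y hy => h.2.1 hxw (hwmin y hy)⟩
      exact Set.eq_empty_iff_forall_notMem.1 hBA x ⟨hxmin, hxA⟩
  · rintro ⟨v, hvA, w, hwB, hvw⟩
    constructor
    · rw [Set.eq_empty_iff_forall_notMem]
      rintro x ⟨⟨hxA, hxmin⟩, hxB⟩
      have hx : x ∈ mins r (A ∩ B) := ⟨⟨hxA, hxB⟩, fun y hy => hxmin y hy.1⟩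
      exact (hvw x hx).1.2 (hxmin v hvA)
    · rw [Set.eq_empty_iff_forall_notMem]
      rintro x ⟨⟨hxB, hxmin⟩, hxA⟩
      have hx : x ∈ mins r (A ∩ B) := ⟨⟨hxA, hxB⟩, fun y hy => hxmin y hy.2⟩
      exact (hvw x hx).2.2 (hxmin w hwB)
end

section
/- For every total preorder ≤ on V and all nonempty subsets A, B, C ⊆ V: if A ⇝ B with respect to ≤ and C ⇝ B with respect to ≤, then (A ∪ C) ⇝ B with respect to ≤. -/
open Set

variable {V : Type*}

theorem stmt_3 [Fintype V] [Nonempty V] (r : V → V → Prop) (h : IsTP r)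
    (A B C : Set V) (hA : A.Nonempty) (hB : B.Nonempty) (hC : C.Nonempty)
    (hAB : Counter r A B) (hCB : Counter r C B) :
    Counter r (A ∪ C) B := by
  obtain ⟨hAB1, hAB2⟩ := hAB
  obtain ⟨hCB1, hCB2⟩ := hCB
  constructor
  · ext x
    simp only [Set.mem_inter_iff, Set.mem_empty_iff_false, iff_false, not_and]
    rintro ⟨hx, hmin⟩ hxB
    rcases hx with hxA | hxC
    · have : x ∈ mins r A ∩ B := ⟨⟨hxA, fun w hw => hmin w (Or.inl hw)⟩, hxB⟩
      rw [hAB1] at this; exact this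
    · have : x ∈ mins r C ∩ B := ⟨⟨hxC, fun w hw => hmin w (Or.inr hw)⟩, hxB⟩
      rw [hCB1] at this; exact this
  · ext x
    simp only [Set.mem_inter_iff, Set.mem_empty_iff_false, iff_false, not_and]
    rintro hxm (hxA | hxC)
    · have : x ∈ mins r B ∩ A := ⟨hxm, hxA⟩
      rw [hAB2] at this; exact this
    · have : x ∈ mins r B ∩ C := ⟨hxm, hxC⟩
      rw [hCB2] at this; exact this
end

section
/- For every total preorder ≤ on V and all nonempty subsets A, B, C ⊆ V: if A and B do not counteract with respect to ≤ and C and B do not counteract with respect to ≤, then A ∪ C and B do not counteract with respect to ≤. -/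
open Set

variable {V : Type*}

theorem stmt_4 [Fintype V] [Nonempty V] (r : V → V → Prop) (h : IsTP r)
    (A B C : Set V) (hA : A.Nonempty) (hB : B.Nonempty) (hC : C.Nonempty)
    (hAB : ¬ Counter r A B) (hCB : ¬ Counter r C B) :
    ¬ Counter r (A ∪ C) B :=by
  obtain ⟨hrefl, htrans, htot⟩ := h
  rintro ⟨h1, h2⟩
  have hBA : mins r B ∩ A = ∅ := by
    apply Set.subset_empty_iff.mp
    intro x ⟨hx, hxA⟩
    rw [← h2]; exact ⟨hx, Or.inl hxA⟩
  have hBC : mins r B ∩ C = ∅ := by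
    apply Set.subset_empty_iff.mp
    intro x ⟨hx, hxC⟩
    rw [← h2]; exact ⟨hx, Or.inr hxC⟩
  have hA1 : (mins r A ∩ B).Nonempty := by
    rcases Set.eq_empty_or_nonempty (mins r A ∩ B) with he | hne
    · exact absurd ⟨he, hBA⟩ hAB
    · exact hne
  have hC1 : (mins r C ∩ B).Nonempty := by
    rcases Set.eq_empty_or_nonempty (mins r C ∩ B) with he | hne
    · exact absurd ⟨he, hBC⟩ hCB
    · exact hne
  obtain ⟨x, ⟨hxA, hxmin⟩, hxB⟩ := hA1
  obtain ⟨y, ⟨hyC, hymin⟩, hyB⟩ := hC1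
  rcases htot x y with hxy | hyx
  · have : x ∈ mins r (A ∪ C) ∩ B := by
      refine ⟨⟨Or.inl hxA, ?_⟩, hxB⟩
      rintro w (hw | hw)
      · exact hxmin w hw
      · exact htrans hxy (hymin w hw)
    rw [h1] at this; exact this
  · have : y ∈ mins r (A ∪ C) ∩ B := by
      refine ⟨⟨Or.inr hyC, ?_⟩, hyB⟩
      rintro w (hw | hw)
      · exact htrans hyx (hxmin w hw)
      · exact hymin w hw
    rw [h1] at this; exact this
end

section
/- A revision operator ∗ satisfying RAGM satisfies (RR) (for all ≤, nonempty A, and all v, w ∉ min(A, ≤): v (≤ ∗ A) w iff (v < w, or (v ≤ w and (v ∈ A or w ∉ A)))) if and only if it satisfies all four of: (CR1) for all v, w ∈ A: v ≤ w iff v (≤ ∗ A) w; (CR2) for all v, w ∉ A: v ≤ w iff v (≤ ∗ A) w; (PR) for all v ∈ A and w ∉ A: if v ≤ w then v < w in ≤ ∗ A; and (DR) for all v ∉ A and w ∈ A with w ∉ min(A, ≤): if v < w then v < w in ≤ ∗ A. -/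
open Set

variable {V : Type*}

theorem stmt_6 [Fintype V] [Nonempty V]
    (op : (V → V → Prop) → Set V → (V → V → Prop))
    (htp : ∀ r (A : Set V), IsTP r → A.Nonempty → IsTP (op r A))
    (hragm : ∀ r (A : Set V), IsTP r → A.Nonempty →
      mins (op r A) Set.univ = mins r A) :
    ((∀ r (A : Set V), IsTP r → A.Nonempty → ∀ v w, v ∉ mins r A → w ∉ mins r A →
        (op r A v w ↔ (SRel r v w ∨ (r v w ∧ (v ∈ A ∨ w ∉ A)))))
      ↔
     ((∀ r (A : Set V), IsTP r → A.Nonempty → ∀ v ∈ A, ∀ w ∈ A,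
        (r v w ↔ op r A v w)) ∧
      (∀ r (A : Set V), IsTP r → A.Nonempty → ∀ v ∉ A, ∀ w ∉ A,
        (r v w ↔ op r A v w)) ∧
      (∀ r (A : Set V), IsTP r → A.Nonempty → ∀ v ∈ A, ∀ w ∉ A,
        r v w → SRel (op r A) v w) ∧
      (∀ r (A : Set V), IsTP r → A.Nonempty → ∀ v ∉ A, ∀ w ∈ A,
        w ∉ mins r A → SRel r v w → SRel (op r A) v w))) := by
  have fact1 : ∀ r (A : Set V), IsTP r → A.Nonempty → ∀ v ∈ mins r A, ∀ w, op r A v w := by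
    intro r A hr hA v hv w
    rw [← hragm r A hr hA] at hv
    exact hv.2 w (mem_univ w)
  have fact2 : ∀ r (A : Set V), IsTP r → A.Nonempty →
      ∀ v, v ∉ mins r A → ∀ w ∈ mins r A, ¬ op r A v w := by
    intro r A hr hA v hv w hw hop
    apply hv
    rw [← hragm r A hr hA]
    rw [← hragm r A hr hA] at hw
    exact ⟨mem_univ v, fun u _ => (htp r A hr hA).2.1 hop (hw.2 u (mem_univ u))⟩
  constructor
  · intro hrr
    refine ⟨?_, ?_, ?_, ?_⟩
    · -- CR1
      intro r A hr hA v hv w hw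
      by_cases hvM : v ∈ mins r A
      · exact ⟨fun _ => fact1 r A hr hA v hvM w, fun _ => hvM.2 w hw⟩
      · by_cases hwM : w ∈ mins r A
        · constructor
          · intro hrvw
            exact absurd (⟨hv, fun u hu => hr.2.1 hrvw (hwM.2 u hu)⟩ : v ∈ mins r A) hvM
          · intro hop; exact absurd hop (fact2 r A hr hA v hvM w hwM)
        · rw [hrr r A hr hA v w hvM hwM]
          constructor
          · intro h; exact Or.inr ⟨h, Or.inl hv⟩
          · rintro (h | h); exacts [h.1, h.1]
    · -- CR2
      intro r A hr hA v hv w hw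
      have hvM : v ∉ mins r A := fun h => hv h.1
      have hwM : w ∉ mins r A := fun h => hw h.1
      rw [hrr r A hr hA v w hvM hwM]
      constructor
      · intro h; exact Or.inr ⟨h, Or.inr hw⟩
      · rintro (h | h); exacts [h.1, h.1]
    · -- PR
      intro r A hr hA v hv w hw hrvw
      have hwM : w ∉ mins r A := fun h => hw h.1
      by_cases hvM : v ∈ mins r A
      · exact ⟨fact1 r A hr hA v hvM w, fact2 r A hr hA w hwM v hvM⟩
      · constructor
        · rw [hrr r A hr hA v w hvM hwM]; exact Or.inr ⟨hrvw, Or.inl hv⟩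
        · rw [hrr r A hr hA w v hwM hvM]
          rintro (h | ⟨h1, h2 | h2⟩)
          · exact h.2 hrvw
          · exact hw h2
          · exact h2 hv
    · -- DR
      intro r A hr hA v hv w hw hwM hs
      have hvM : v ∉ mins r A := fun h => hv h.1
      constructor
      · rw [hrr r A hr hA v w hvM hwM]; exact Or.inl hs
      · rw [hrr r A hr hA w v hwM hvM]
        rintro (h | ⟨h1, _⟩)
        · exact hs.2 h.1
        · exact hs.2 h1
  · rintro ⟨cr1, cr2, pr, dr⟩ r A hr hA v w hvM hwM
    by_cases hv : v ∈ A <;> by_cases hw : w ∈ A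
    · -- v ∈ A, w ∈ A
      rw [← cr1 r A hr hA v hv w hw]
      constructor
      · intro h; exact Or.inr ⟨h, Or.inl hv⟩
      · rintro (h | h); exacts [h.1, h.1]
    · -- v ∈ A, w ∉ A
      have key : op r A v w ↔ r v w := by
        constructor
        · intro hop
          by_contra hnr
          have hrwv : r w v := (hr.2.2 v w).resolve_left hnr
          exact (dr r A hr hA w hw v hv hvM ⟨hrwv, hnr⟩).2 hop
        · intro hrvw
          exact (pr r A hr hA v hv w hw hrvw).1
      rw [key]
      constructor
      · intro h; exact Or.inr ⟨h, Or.inl hv⟩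
      · rintro (h | h); exacts [h.1, h.1]
    · -- v ∉ A, w ∈ A
      constructor
      · intro hop
        have hnwv : ¬ r w v := fun hrwv => (pr r A hr hA w hw v hv hrwv).2 hop
        exact Or.inl ⟨(hr.2.2 v w).resolve_right hnwv, hnwv⟩
      · rintro (h | ⟨_, h2 | h2⟩)
        · exact (dr r A hr hA v hv w hw hwM h).1
        · exact absurd h2 hv
        · exact absurd hw h2
    · -- v ∉ A, w ∉ A
      rw [← cr2 r A hr hA v hv w hw]
      constructor
      · intro h; exact Or.inr ⟨h, Or.inr hw⟩
      · rintro (h | h); exacts [h.1, h.1]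
end

section
/- A revision operator ∗ satisfying RAGM satisfies (C1) (for all ≤ and all nonempty B ⊆ A: min(B, ≤ ∗ A) = min(B, ≤)), (C2) (for all ≤ and all nonempty B with B ∩ A = ∅: min(B, ≤ ∗ A) = min(B, ≤)), (P) (if min(B, ≤) ∩ A ≠ ∅ then min(B, ≤ ∗ A) ⊆ A) and (D) (if A ⇝ B with respect to ≤ then min(B, ≤ ∗ A) ∩ A = ∅) if and only if it coincides with the restrained revision operator, i.e., ≤ ∗ A = ≤ ∗ᴿ A for every total preorder ≤ and every nonempty A ⊆ V. -/
open Set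

variable {V : Type*}

/-! ### Auxiliary lemmas -/

lemma mins_finset_aux {r : V → V → Prop} (htp : IsTP r) (s : Finset V) (hs : s.Nonempty) :
    ∃ v ∈ s, ∀ w ∈ s, r v w := by
  classical
  obtain ⟨hrefl, htrans, htot⟩ := htp
  induction s using Finset.induction_on with
  | empty => exact absurd hs (by simp)
  | @insert a s ha ih =>
    by_cases h : s.Nonempty
    · obtain ⟨v, hv, hmin⟩ := ih h
      rcases htot v a with h1 | h1
      · refine ⟨v, Finset.mem_insert_of_mem hv, ?_⟩
        intro w hw
        rcases Finset.mem_insert.mp hw with rfl | hw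
        exacts [h1, hmin w hw]
      · refine ⟨a, Finset.mem_insert_self a s, ?_⟩
        intro w hw
        rcases Finset.mem_insert.mp hw with h2 | hw
        · subst h2; exact hrefl _
        · exact htrans h1 (hmin w hw)
    · have hse : s = ∅ := Finset.not_nonempty_iff_eq_empty.mp h
      subst hse
      refine ⟨a, by simp, ?_⟩
      intro w hw
      simp only [Finset.mem_insert, Finset.notMem_empty, or_false] at hw
      subst hw
      exact hrefl _

lemma mins_nonempty_s7 [Fintype V] {r : V → V → Prop} (htp : IsTP r)
    {B : Set V} (hB : B.Nonempty) : (mins r B).Nonempty := by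
  classical
  obtain ⟨v, hv, hmin⟩ := mins_finset_aux htp B.toFinset (by simpa using hB)
  exact ⟨v, by simpa using hv, fun w hw => hmin w (by simpa using hw)⟩

lemma mem_mins_pair {r : V → V → Prop} (hrefl : Reflexive r) {v w : V} :
    v ∈ mins r {v, w} ↔ r v w := by
  constructor
  · rintro ⟨-, h⟩
    exact h w (by simp)
  · intro h
    refine ⟨by simp, ?_⟩
    intro u hu
    rcases hu with rfl | hu
    · exact hrefl _
    · simp only [Set.mem_singleton_iff] at hu; subst hu; exact h

lemma mem_mins_pair' {r : V → V → Prop} (hrefl : Reflexive r) {v w : V} :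
    w ∈ mins r {v, w} ↔ r w v := by
  constructor
  · rintro ⟨-, h⟩
    exact h v (by simp)
  · intro h
    refine ⟨by simp, ?_⟩
    intro u hu
    rcases hu with rfl | hu
    · exact h
    · simp only [Set.mem_singleton_iff] at hu; subst hu; exact hrefl _

/-- On pairs inside A, restrained coincides with r. -/
lemma restrained_iff_in {r : V → V → Prop} (hr : IsTP r) {A : Set V} {v w : V}
    (hv : v ∈ A) (hw : w ∈ A) : restrained r A v w ↔ r v w := by
  obtain ⟨hrefl, htrans, htot⟩ := hr
  constructor
  · rintro (h | ⟨-, (⟨h, -⟩ | ⟨h, -⟩)⟩)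
    · exact h.2 w hw
    · exact h
    · exact h
  · intro h
    by_cases hvm : v ∈ mins r A
    · exact Or.inl hvm
    · refine Or.inr ⟨?_, Or.inr ⟨h, Or.inl hv⟩⟩
      intro hwm
      exact hvm ⟨hv, fun u hu => htrans h (hwm.2 u hu)⟩

/-- On pairs outside A, restrained coincides with r. -/
lemma restrained_iff_out {r : V → V → Prop} (hr : IsTP r) {A : Set V} {v w : V}
    (hv : v ∉ A) (hw : w ∉ A) : restrained r A v w ↔ r v w := by
  constructor
  · rintro (h | ⟨-, (⟨h, -⟩ | ⟨h, -⟩)⟩)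
    · exact absurd h.1 hv
    · exact h
    · exact h
  · intro h
    exact Or.inr ⟨fun hwm => hw hwm.1, Or.inr ⟨h, Or.inr hw⟩⟩

/-- Restrained revision satisfies (C1). -/
lemma restrained_C1 {r : V → V → Prop} (hr : IsTP r) {A B : Set V}
    (hBA : B ⊆ A) : mins (restrained r A) B = mins r B := by
  ext v
  constructor
  · rintro ⟨hv, hmin⟩
    exact ⟨hv, fun w hw => (restrained_iff_in hr (hBA hv) (hBA hw)).mp (hmin w hw)⟩
  · rintro ⟨hv, hmin⟩
    exact ⟨hv, fun w hw => (restrained_iff_in hr (hBA hv) (hBA hw)).mpr (hmin w hw)⟩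

/-- Restrained revision satisfies (C2). -/
lemma restrained_C2 {r : V → V → Prop} (hr : IsTP r) {A B : Set V}
    (hBA : B ∩ A = ∅) : mins (restrained r A) B = mins r B := by
  have hout : ∀ x ∈ B, x ∉ A := by
    intro x hx hxA
    exact absurd (Set.mem_inter hx hxA) (by simp [hBA])
  ext v
  constructor
  · rintro ⟨hv, hmin⟩
    exact ⟨hv, fun w hw => (restrained_iff_out hr (hout v hv) (hout w hw)).mp (hmin w hw)⟩
  · rintro ⟨hv, hmin⟩
    exact ⟨hv, fun w hw => (restrained_iff_out hr (hout v hv) (hout w hw)).mpr (hmin w hw)⟩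

/-- Restrained revision satisfies (P). -/
lemma restrained_P {r : V → V → Prop} {A B : Set V}
    (hPB : (mins r B ∩ A).Nonempty) : mins (restrained r A) B ⊆ A := by
  obtain ⟨x, hxB, hxA⟩ := hPB
  intro v hv
  by_contra hvA
  have h := hv.2 x hxB.1
  rcases h with h | ⟨-, (⟨-, h2⟩ | ⟨-, h2⟩)⟩
  · exact hvA h.1
  · exact h2 (hxB.2 v hv.1)
  · rcases h2 with h2 | h2
    exacts [hvA h2, h2 hxA]

/-- Restrained revision satisfies (D). -/
lemma restrained_D [Fintype V] {r : V → V → Prop} (hr : IsTP r) {A B : Set V}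
    (hB : B.Nonempty) (hc : Counter r A B) : mins (restrained r A) B ∩ A = ∅ := by
  obtain ⟨hrefl, htrans, htot⟩ := hr
  obtain ⟨hc1, hc2⟩ := hc
  ext v
  simp only [Set.mem_inter_iff, Set.mem_empty_iff_false, iff_false, not_and]
  rintro ⟨hvB, hmin⟩ hvA
  have hvnm : v ∉ mins r A := by
    intro hm
    have hx : v ∈ mins r A ∩ B := ⟨hm, hvB⟩
    rw [hc1] at hx; exact hx
  obtain ⟨u, humin⟩ := mins_nonempty_s7 ⟨hrefl, htrans, htot⟩ hB
  have huA : u ∉ A := by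
    intro hm
    have hx : u ∈ mins r B ∩ A := ⟨humin, hm⟩
    rw [hc2] at hx; exact hx
  have hvu : ¬ r v u := by
    intro h
    have hx : v ∈ mins r B ∩ A := ⟨⟨hvB, fun w hw => htrans h (humin.2 w hw)⟩, hvA⟩
    rw [hc2] at hx; exact hx
  have := hmin u humin.1
  rcases this with h | ⟨-, (⟨h1, -⟩ | ⟨h1, -⟩)⟩
  · exact hvnm h
  · exact hvu h1
  · exact hvu h1

/-- Membership in mins of univ. -/
lemma mem_mins_univ {r : V → V → Prop} {v : V} :
    v ∈ mins r Set.univ ↔ ∀ w, r v w := by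
  simp [mins]

theorem stmt_7 [Fintype V] [Nonempty V]
    (op : (V → V → Prop) → Set V → (V → V → Prop))
    (htp : ∀ r (A : Set V), IsTP r → A.Nonempty → IsTP (op r A))
    (hragm : ∀ r (A : Set V), IsTP r → A.Nonempty →
      mins (op r A) Set.univ = mins r A) :
    (((∀ r (A B : Set V), IsTP r → B.Nonempty → B ⊆ A →
        mins (op r A) B = mins r B) ∧
      (∀ r (A B : Set V), IsTP r → A.Nonempty → B.Nonempty → B ∩ A = ∅ →
        mins (op r A) B = mins r B) ∧
      (∀ r (A B : Set V), IsTP r → A.Nonempty → B.Nonempty →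
        (mins r B ∩ A).Nonempty → mins (op r A) B ⊆ A) ∧
      (∀ r (A B : Set V), IsTP r → A.Nonempty → B.Nonempty →
        Counter r A B → mins (op r A) B ∩ A = ∅))
      ↔
     (∀ r (A : Set V), IsTP r → A.Nonempty → op r A = restrained r A)) := by
  constructor
  · rintro ⟨hC1, hC2, hP, hD⟩ r A hr hA
    have hq : IsTP (op r A) := htp r A hr hA
    obtain ⟨qrefl, qtrans, qtot⟩ := hq
    obtain ⟨rrefl, rtrans, rtot⟩ := hr
    funext v w
    apply propext
    have hBne : ({v, w} : Set V).Nonempty := ⟨v, by simp⟩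
    by_cases hv : v ∈ A
    · by_cases hw : w ∈ A
      · -- both in A : use C1
        have hsub : ({v, w} : Set V) ⊆ A := by
          rintro x (rfl | hx)
          · exact hv
          · simp only [Set.mem_singleton_iff] at hx; subst hx; exact hw
        have h1 := hC1 r A {v, w} ⟨rrefl, rtrans, rtot⟩ hBne hsub
        calc op r A v w ↔ v ∈ mins (op r A) {v, w} := (mem_mins_pair qrefl).symm
          _ ↔ v ∈ mins r {v, w} := by rw [h1]
          _ ↔ r v w := mem_mins_pair rrefl
          _ ↔ restrained r A v w := (restrained_iff_in ⟨rrefl, rtrans, rtot⟩ hv hw).symm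
      · -- v ∈ A, w ∉ A
        by_cases hrvw : r v w
        · -- both sides true
          apply iff_of_true
          · have hPB : (mins r {v, w} ∩ A).Nonempty :=
              ⟨v, (mem_mins_pair rrefl).mpr hrvw, hv⟩
            have hsub := hP r A {v, w} ⟨rrefl, rtrans, rtot⟩ hA hBne hPB
            obtain ⟨x, hx⟩ := mins_nonempty_s7 ⟨qrefl, qtrans, qtot⟩ hBne
            have hxv : x = v := by
              rcases hx.1 with rfl | h
              · rfl
              · simp only [Set.mem_singleton_iff] at h; subst h
                exact absurd (hsub hx) hw
            subst hxv
            exact (mem_mins_pair qrefl).mp hx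
          · by_cases hvm : v ∈ mins r A
            · exact Or.inl hvm
            · exact Or.inr ⟨fun h => hw h.1, Or.inr ⟨hrvw, Or.inl hv⟩⟩
        · -- ¬ r v w, so w strictly below v
          have hrwv : r w v := (rtot v w).resolve_left hrvw
          by_cases hvm : v ∈ mins r A
          · apply iff_of_true
            · have := hragm r A ⟨rrefl, rtrans, rtot⟩ hA
              have hvq : v ∈ mins (op r A) Set.univ := by rw [this]; exact hvm
              exact (mem_mins_univ.mp hvq) w
            · exact Or.inl hvm
          · -- Counter case, use D
            have hc : Counter r A {v, w} := by
              constructor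
              · ext x
                simp only [Set.mem_inter_iff, Set.mem_empty_iff_false, iff_false, not_and]
                rintro hxm (rfl | hx)
                · exact hvm hxm
                · simp only [Set.mem_singleton_iff] at hx; subst hx; exact hw hxm.1
              · ext x
                simp only [Set.mem_inter_iff, Set.mem_empty_iff_false, iff_false, not_and]
                rintro hxm hxA
                rcases hxm.1 with rfl | hx
                · exact hrvw (hxm.2 w (by simp))
                · simp only [Set.mem_singleton_iff] at hx; subst hx; exact hw hxA
            have hd := hD r A {v, w} ⟨rrefl, rtrans, rtot⟩ hA hBne hc
            apply iff_of_false
            · intro hq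
              have hx : v ∈ mins (op r A) {v, w} ∩ A :=
                ⟨(mem_mins_pair qrefl).mpr hq, hv⟩
              rw [hd] at hx; exact hx
            · rintro (h | ⟨-, (⟨h1, -⟩ | ⟨h1, -⟩)⟩)
              · exact hvm h
              · exact hrvw h1
              · exact hrvw h1
    · by_cases hw : w ∈ A
      · -- v ∉ A, w ∈ A
        by_cases hrwv : r w v
        · -- both sides false
          apply iff_of_false
          · intro hq
            have hPB : (mins r {v, w} ∩ A).Nonempty :=
              ⟨w, (mem_mins_pair' rrefl).mpr hrwv, hw⟩
            have hsub := hP r A {v, w} ⟨rrefl, rtrans, rtot⟩ hA hBne hPB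
            have : v ∈ mins (op r A) {v, w} := (mem_mins_pair qrefl).mpr hq
            exact hv (hsub this)
          · rintro (h | ⟨hwm, (⟨-, h2⟩ | ⟨-, (h2 | h2)⟩)⟩)
            · exact hv h.1
            · exact h2 hrwv
            · exact hv h2
            · exact h2 hw
        · have hrvw : r v w := (rtot w v).resolve_left hrwv
          by_cases hwm : w ∈ mins r A
          · -- both sides false
            apply iff_of_false
            · intro hq
              have := hragm r A ⟨rrefl, rtrans, rtot⟩ hA
              have hwq : w ∈ mins (op r A) Set.univ := by rw [this]; exact hwm
              have hvq : v ∈ mins (op r A) Set.univ :=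
                mem_mins_univ.mpr (fun u => qtrans hq ((mem_mins_univ.mp hwq) u))
              rw [this] at hvq
              exact hv hvq.1
            · rintro (h | ⟨hwm', -⟩)
              · exact hv h.1
              · exact hwm' hwm
          · -- Counter case, use D
            have hc : Counter r A {v, w} := by
              constructor
              · ext x
                simp only [Set.mem_inter_iff, Set.mem_empty_iff_false, iff_false, not_and]
                rintro hxm (rfl | hx)
                · exact hv hxm.1
                · simp only [Set.mem_singleton_iff] at hx; subst hx; exact hwm hxm
              · ext x
                simp only [Set.mem_inter_iff, Set.mem_empty_iff_false, iff_false, not_and]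
                rintro hxm hxA
                rcases hxm.1 with rfl | hx
                · exact hv hxA
                · simp only [Set.mem_singleton_iff] at hx; subst hx
                  exact hrwv (hxm.2 v (by simp))
            have hd := hD r A {v, w} ⟨rrefl, rtrans, rtot⟩ hA hBne hc
            apply iff_of_true
            · have hwnm : w ∉ mins (op r A) {v, w} := by
                intro h
                exact absurd (Set.mem_inter h hw) (by simp [hd])
              have : ¬ op r A w v := fun h => hwnm ((mem_mins_pair' qrefl).mpr h)
              exact (qtot v w).resolve_right this
            · exact Or.inr ⟨hwm, Or.inl ⟨hrvw, hrwv⟩⟩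
      · -- both out of A : use C2
        have hdisj : ({v, w} : Set V) ∩ A = ∅ := by
          ext x
          simp only [Set.mem_inter_iff, Set.mem_empty_iff_false, iff_false, not_and]
          rintro (rfl | hx) hxA
          · exact hv hxA
          · simp only [Set.mem_singleton_iff] at hx; subst hx; exact hw hxA
        have h1 := hC2 r A {v, w} ⟨rrefl, rtrans, rtot⟩ hA hBne hdisj
        calc op r A v w ↔ v ∈ mins (op r A) {v, w} := (mem_mins_pair qrefl).symm
          _ ↔ v ∈ mins r {v, w} := by rw [h1]
          _ ↔ r v w := mem_mins_pair rrefl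
          _ ↔ restrained r A v w := (restrained_iff_out ⟨rrefl, rtrans, rtot⟩ hv hw).symm
  · intro h
    refine ⟨?_, ?_, ?_, ?_⟩
    · intro r A B hr hB hBA
      have hA : A.Nonempty := hB.mono hBA
      rw [h r A hr hA]
      exact restrained_C1 hr hBA
    · intro r A B hr hA hB hBA
      rw [h r A hr hA]
      exact restrained_C2 hr hBA
    · intro r A B hr hA hB hPB
      rw [h r A hr hA]
      exact restrained_P hPB
    · intro r A B hr hA hB hc
      rw [h r A hr hA]
      exact restrained_D hr hB hc
end

section
/- Restrained revision satisfies property (O): let ≤ be a total preorder on V and let A₁, …, Aₙ be nonempty subsets of V such that min(V, ≤) ∩ Aᵢ ≠ ∅ for every i ∈ {1, …, n} (Γ-compatibility); define ≤⁰ = ≤ and ≤ⁱ = ≤ⁱ⁻¹ ∗ᴿ Aᵢ for i = 1, …, n; then min(V, ≤ⁿ) ⊆ min(V, ≤) (i.e., the initial knowledge base is contained in the knowledge base obtained after the whole revision sequence). -/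
open Set

variable {V : Type*}

theorem stmt_8 [Fintype V] [Nonempty V] (r : V → V → Prop) (h : IsTP r)
    (Γ : List (Set V)) (hne : ∀ A ∈ Γ, A.Nonempty)
    (hcompat : ∀ A ∈ Γ, (mins r Set.univ ∩ A).Nonempty) :
    mins (Γ.foldl restrained r) Set.univ ⊆ mins r Set.univ := by
  obtain ⟨hrefl, htrans, htot⟩ := h
  set M := mins r Set.univ with hM
  -- Key invariant: no element outside M is below an element of M.
  have key : ∀ (Γ' : List (Set V)) (s : V → V → Prop),
      (∀ A ∈ Γ', (M ∩ A).Nonempty) →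
      (∀ x v, x ∉ M → v ∈ M → ¬ s x v) →
      (∀ x v, x ∉ M → v ∈ M → ¬ (Γ'.foldl restrained s) x v) := by
    intro Γ'
    induction Γ' with
    | nil => intro s _ hI; exact hI
    | cons A tl ih =>
      intro s hc hI
      simp only [List.foldl_cons]
      apply ih
      · intro B hB; exact hc B (List.mem_cons_of_mem _ hB)
      · obtain ⟨a, haM, haA⟩ := hc A (List.mem_cons_self)
        have hminsub : ∀ x, x ∈ mins s A → x ∈ M := by
          intro x hx
          by_contra hxM
          exact hI x a hxM haM (hx.2 a haA)
        intro x v hx hv hxv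
        rcases hxv with h1 | ⟨_, h2⟩
        · exact hx (hminsub x h1)
        · rcases h2 with ⟨hs, _⟩ | ⟨hs, _⟩ <;> exact hI x v hx hv hs
  -- M is nonempty: a finite nonempty type with a total preorder has a minimum.
  have hMne : M.Nonempty := by
    have hlist : ∀ l : List V, ∀ v₀ ∈ l, ∃ v ∈ l, ∀ w ∈ l, r v w := by
      intro l
      induction l with
      | nil => simp
      | cons a tl ih =>
        intro v₀ _
        by_cases htl : tl = []
        · subst htl
          refine ⟨a, by simp, ?_⟩
          intro w hw
          simp only [List.mem_singleton] at hw
          subst hw; exact hrefl _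
        · obtain ⟨b, hbl⟩ := List.exists_mem_of_ne_nil tl htl
          obtain ⟨v, hv, hvmin⟩ := ih b hbl
          rcases htot a v with hav | hva
          · refine ⟨a, List.mem_cons_self, ?_⟩
            intro w hw
            rcases List.mem_cons.mp hw with rfl | hw
            · exact hrefl w
            · exact htrans hav (hvmin w hw)
          · refine ⟨v, List.mem_cons_of_mem _ hv, ?_⟩
            intro w hw
            rcases List.mem_cons.mp hw with rfl | hw
            · exact hva
            · exact hvmin w hw
    obtain ⟨v₀⟩ := ‹Nonempty V›
    obtain ⟨v, _, hv⟩ := hlist Finset.univ.toList v₀ (by simp)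
    exact ⟨v, trivial, fun w _ => hv w (by simp)⟩
  obtain ⟨m, hm⟩ := hMne
  have hbase : ∀ x v, x ∉ M → v ∈ M → ¬ r x v := by
    intro x v hx hv hxv
    exact hx ⟨trivial, fun w _ => htrans hxv (hv.2 w trivial)⟩
  intro x hx
  by_contra hxM
  exact key Γ r hcompat hbase x m hxM hm (hx.2 m trivial)
end

section
/- Restrained revision satisfies property (Q): let ≤ be a total preorder on V, A₀ a nonempty subset of V, and A₁, …, Aₙ nonempty subsets of V such that min(V, ≤) ∩ Aᵢ ≠ ∅ and min(V, ≤ ∗ᴿ A₀) ∩ Aᵢ ≠ ∅ for every i ∈ {1, …, n}, and such that min(V, ≤) ∩ min(V, ≤ ∗ᴿ A₀) = ∅ (the two knowledge bases are jointly inconsistent); let ≤′ be obtained from ≤ ∗ᴿ A₀ by successively applying ∗ᴿ with inputs A₁, …, Aₙ; then min(V, ≤′) ⊆ min(V, ≤ ∗ᴿ A₀) and min(V, ≤′) is not a subset of min(V, ≤). -/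
open Set

variable {V : Type*}

lemma tp_restrained {r : V → V → Prop} (h : IsTP r) (A : Set V) :
    IsTP (restrained r A) := by
  obtain ⟨hrefl, htrans, htot⟩ := h
  refine ⟨?_, ?_, ?_⟩
  · intro v
    by_cases hv : v ∈ mins r A
    · exact Or.inl hv
    · exact Or.inr ⟨hv, Or.inr ⟨hrefl v, by tauto⟩⟩
  · rintro v w u (hv | ⟨hwm, hd1⟩) hwu
    · exact Or.inl hv
    · rcases hwu with hw | ⟨hum, hd2⟩
      · exact absurd hw hwm
      refine Or.inr ⟨hum, ?_⟩
      rcases hd1 with ⟨h1, h1'⟩ | ⟨h1, hc1⟩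
      · have hwu' : r w u := by rcases hd2 with ⟨h2, _⟩ | ⟨h2, _⟩ <;> exact h2
        exact Or.inl ⟨htrans h1 hwu', fun huv => h1' (htrans hwu' huv)⟩
      · rcases hd2 with ⟨h2, h2'⟩ | ⟨h2, hc2⟩
        · exact Or.inl ⟨htrans h1 h2, fun huv => h2' (htrans huv h1)⟩
        · refine Or.inr ⟨htrans h1 h2, ?_⟩
          rcases hc1 with hv | hw
          · exact Or.inl hv
          · rcases hc2 with hw' | hu
            · exact absurd hw' hw
            · exact Or.inr hu
  · intro v w
    by_cases hv : v ∈ mins r A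
    · exact Or.inl (Or.inl hv)
    by_cases hw : w ∈ mins r A
    · exact Or.inr (Or.inl hw)
    rcases htot v w with hvw | hwv
    · by_cases hwv : r w v
      · by_cases hc : v ∈ A ∨ w ∉ A
        · exact Or.inl (Or.inr ⟨hw, Or.inr ⟨hvw, hc⟩⟩)
        · push_neg at hc
          exact Or.inr (Or.inr ⟨hv, Or.inr ⟨hwv, Or.inl hc.2⟩⟩)
      · exact Or.inl (Or.inr ⟨hw, Or.inl ⟨hvw, hwv⟩⟩)
    · by_cases hvw : r v w
      · by_cases hc : v ∈ A ∨ w ∉ A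
        · exact Or.inl (Or.inr ⟨hw, Or.inr ⟨hvw, hc⟩⟩)
        · push_neg at hc
          exact Or.inr (Or.inr ⟨hv, Or.inr ⟨hwv, Or.inl hc.2⟩⟩)
      · exact Or.inr (Or.inr ⟨hv, Or.inl ⟨hwv, hvw⟩⟩)

/-- On a nonempty finite type, a total preorder has a minimal element. -/
lemma mins_nonempty_s9 [Fintype V] [Nonempty V] {s : V → V → Prop} (hs : IsTP s) :
    (mins s Set.univ).Nonempty := by
  obtain ⟨hrefl, htrans, htot⟩ := hs
  have hirr : IsIrrefl V (SRel s) := ⟨fun a ⟨h1, h2⟩ => h2 h1⟩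
  have htr : IsTrans V (SRel s) :=
    ⟨fun a b c ⟨h1, h1'⟩ ⟨h2, h2'⟩ => ⟨htrans h1 h2, fun h => h2' (htrans h h1)⟩⟩
  have hwf : WellFounded (SRel s) := Finite.wellFounded_of_trans_of_irrefl _
  obtain ⟨a, -, ha⟩ := hwf.has_min Set.univ ⟨Classical.arbitrary V, trivial⟩
  refine ⟨a, trivial, fun w _ => ?_⟩
  rcases htot a w with h | h
  · exact h
  · by_contra haw
    exact ha w trivial ⟨h, haw⟩

/-- In a total preorder, minimal elements are strictly below non-minimal ones. -/
lemma sep_of_mins {s : V → V → Prop} (hs : IsTP s) :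
    ∀ v ∈ mins s Set.univ, ∀ w ∉ mins s Set.univ, SRel s v w := by
  obtain ⟨hrefl, htrans, htot⟩ := hs
  intro v hv w hw
  refine ⟨hv.2 w trivial, fun hwv => hw ⟨trivial, fun u _ => htrans hwv (hv.2 u trivial)⟩⟩

/-- Revision by a set meeting M₀ preserves strict separation below M₀. -/
lemma sep_restrained {s : V → V → Prop} {M₀ A : Set V}
    (hA : (M₀ ∩ A).Nonempty)
    (hsep : ∀ v ∈ M₀, ∀ w ∉ M₀, SRel s v w) :
    ∀ v ∈ M₀, ∀ w ∉ M₀, SRel (restrained s A) v w := by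
  obtain ⟨a, haM, haA⟩ := hA
  have hminA : mins s A ⊆ M₀ := by
    intro x ⟨hxA, hx⟩
    by_contra hxM
    exact (hsep a haM x hxM).2 (hx a haA)
  intro v hv w hw
  have hwm : w ∉ mins s A := fun hc => hw (hminA hc)
  have hsvw := hsep v hv w hw
  constructor
  · exact Or.inr ⟨hwm, Or.inl hsvw⟩
  · rintro (hwmin | ⟨hvm, hd⟩)
    · exact hw (hminA hwmin)
    · rcases hd with ⟨h1, _⟩ | ⟨h1, _⟩ <;> exact hsvw.2 h1

lemma fold_inv (Γ : List (Set V)) (M₀ : Set V) :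
    ∀ s : V → V → Prop, IsTP s → (∀ A ∈ Γ, (M₀ ∩ A).Nonempty) →
    (∀ v ∈ M₀, ∀ w ∉ M₀, SRel s v w) →
    IsTP (Γ.foldl restrained s) ∧
      ∀ v ∈ M₀, ∀ w ∉ M₀, SRel (Γ.foldl restrained s) v w := by
  induction Γ with
  | nil => intro s hs _ hsep; exact ⟨hs, hsep⟩
  | cons A Γ ih =>
    intro s hs hmeet hsep
    exact ih (restrained s A) (tp_restrained hs A)
      (fun B hB => hmeet B (List.mem_cons_of_mem _ hB))
      (sep_restrained (hmeet A List.mem_cons_self) hsep)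

theorem stmt_9 [Fintype V] [Nonempty V] (r : V → V → Prop) (h : IsTP r)
    (A₀ : Set V) (hA₀ : A₀.Nonempty)
    (Γ : List (Set V)) (hne : ∀ A ∈ Γ, A.Nonempty)
    (hcompat : ∀ A ∈ Γ, (mins r Set.univ ∩ A).Nonempty)
    (hcompat' : ∀ A ∈ Γ, (mins (restrained r A₀) Set.univ ∩ A).Nonempty)
    (hinc : mins r Set.univ ∩ mins (restrained r A₀) Set.univ = ∅) :
    mins (Γ.foldl restrained (restrained r A₀)) Set.univ ⊆
      mins (restrained r A₀) Set.univ ∧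
    ¬ mins (Γ.foldl restrained (restrained r A₀)) Set.univ ⊆ mins r Set.univ := by
  set r₀ := restrained r A₀ with hr₀
  have htp₀ : IsTP r₀ := tp_restrained h A₀
  obtain ⟨htp, hsep⟩ := fold_inv Γ (mins r₀ Set.univ) r₀ htp₀ hcompat' (sep_of_mins htp₀)
  have hsub : mins (Γ.foldl restrained r₀) Set.univ ⊆ mins r₀ Set.univ := by
    intro v hv
    by_contra hvM
    obtain ⟨u, hu⟩ := mins_nonempty_s9 htp₀
    exact (hsep u hu v hvM).2 (hv.2 u trivial)
  refine ⟨hsub, fun hcon => ?_⟩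
  obtain ⟨v, hv⟩ := mins_nonempty_s9 htp
  have : v ∈ mins r Set.univ ∩ mins r₀ Set.univ := ⟨hcon hv, hsub hv⟩
  rw [hinc] at this
  exact this
end

section
/- Restrained revision satisfies property (S): let ≤ be a total preorder on V, A ⊆ V with A ≠ ∅ and A ≠ V, and B ⊆ V nonempty; if min(A, ≤) ∩ B = ∅ and min(V ∖ A, ≤) ∩ B = ∅, then min(B, (≤ ∗ᴿ A) ∗ᴿ (V ∖ A)) = min(B, ≤ ∗ᴿ A) (i.e., B(E ∗ α ∗ ¬α ∗ β) = B(E ∗ α ∗ β) whenever ¬β ∈ B(E ∗ α) and ¬β ∈ B(E ∗ ¬α)). -/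
open Set

variable {V : Type*}

lemma restrained_agree (r : V → V → Prop) (A : Set V) {v w : V}
    (hv : v ∉ A) (hw : w ∉ A) : restrained r A v w ↔ r v w := by
  have hvm : v ∉ mins r A := fun hm => hv hm.1
  have hwm : w ∉ mins r A := fun hm => hw hm.1
  constructor
  · rintro (h | ⟨-, h | ⟨h, -⟩⟩)
    · exact absurd h hvm
    · exact h.1
    · exact h
  · intro h
    exact Or.inr ⟨hwm, Or.inr ⟨h, Or.inr hw⟩⟩

lemma mins_restrained_compl (r : V → V → Prop) (A : Set V) :
    mins (restrained r A) (Set.univ \ A) = mins r (Set.univ \ A) := by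
  ext v
  simp only [mins, mem_setOf_eq, mem_diff, mem_univ, true_and]
  constructor
  · rintro ⟨hv, hall⟩
    exact ⟨hv, fun w hw => (restrained_agree r A hv hw).mp (hall w hw)⟩
  · rintro ⟨hv, hall⟩
    exact ⟨hv, fun w hw => (restrained_agree r A hv hw).mpr (hall w hw)⟩

/-- key: if v is not r-minimal in A, and both r₁ v w, r₁ w v hold, then w∈A ∨ v∉A. -/
lemma restrained_key (r : V → V → Prop) (A : Set V) {v w : V}
    (hvm : v ∉ mins r A) (h1 : restrained r A v w) (h2 : restrained r A w v) :
    w ∈ A ∨ v ∉ A := by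
  rcases h1 with h1 | ⟨hwm, h1⟩
  · exact absurd h1 hvm
  rcases h2 with h2 | ⟨-, h2⟩
  · exact absurd h2 hwm
  by_contra hc
  push_neg at hc
  obtain ⟨hwA, hvA⟩ := hc
  have hvw : r v w := by rcases h1 with h | h <;> exact h.1
  rcases h2 with h | ⟨-, h⟩
  · exact h.2 hvw
  · rcases h with h | h
    · exact hwA h
    · exact h hvA

theorem stmt_10 [Fintype V] [Nonempty V] (r : V → V → Prop) (h : IsTP r)
    (A B : Set V) (hA : A.Nonempty) (hAV : A ≠ Set.univ) (hB : B.Nonempty)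
    (h1 : mins r A ∩ B = ∅) (h2 : mins r (Set.univ \ A) ∩ B = ∅) :
    mins (restrained (restrained r A) (Set.univ \ A)) B =
      mins (restrained r A) B := by
  set r1 := restrained r A with hr1
  have hcompl : mins r1 (Set.univ \ A) = mins r (Set.univ \ A) :=
    mins_restrained_compl r A
  -- membership facts for elements of B
  have hnotminA : ∀ v ∈ B, v ∉ mins r A := by
    intro v hv hm
    exact absurd (Set.mem_inter hm hv) (by rw [h1]; exact notMem_empty v)
  have hnotminC : ∀ v ∈ B, v ∉ mins r1 (Set.univ \ A) := by
    intro v hv hm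
    rw [hcompl] at hm
    exact absurd (Set.mem_inter hm hv) (by rw [h2]; exact notMem_empty v)
  -- main pointwise equivalence on B
  have main : ∀ v ∈ B, ∀ w ∈ B,
      (restrained r1 (Set.univ \ A) v w ↔ r1 v w) := by
    intro v hv w hw
    have hvC := hnotminC v hv
    have hwC := hnotminC w hw
    have hvA := hnotminA v hv
    constructor
    · rintro (hx | ⟨-, hx | ⟨hx, -⟩⟩)
      · exact absurd hx hvC
      · exact hx.1
      · exact hx
    · intro hvw
      by_cases hwv : r1 w v
      · have := restrained_key r A hvA hvw hwv
        refine Or.inr ⟨hwC, Or.inr ⟨hvw, ?_⟩⟩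
        rcases this with h' | h'
        · exact Or.inr (by simp [h'])
        · exact Or.inl (by simp [h'])
      · exact Or.inr ⟨hwC, Or.inl ⟨hvw, hwv⟩⟩
  ext v
  simp only [mins, mem_setOf_eq]
  constructor
  · rintro ⟨hv, hall⟩
    exact ⟨hv, fun w hw => (main v hv w hw).mp (hall w hw)⟩
  · rintro ⟨hv, hall⟩
    exact ⟨hv, fun w hw => (main v hv w hw).mpr (hall w hw)⟩
end

section
/- Restrained revision satisfies property (U): for every total preorder ≤ on V and all nonempty A, B ⊆ V, if min(B, ≤ ∗ᴿ A) ∩ A ≠ ∅ then min(B, ≤ ∗ᴿ A) ⊆ A (i.e., if ¬α ∉ B(E ∗ α ∗ β) then α ∈ B(E ∗ α ∗ β), so the epistemic status of the penultimate input is always completely determined). -/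
open Set

variable {V : Type*}

theorem stmt_14 [Fintype V] [Nonempty V] (r : V → V → Prop) (h : IsTP r)
    (A B : Set V) (hA : A.Nonempty) (hB : B.Nonempty)
    (hmem : (mins (restrained r A) B ∩ A).Nonempty) :
    mins (restrained r A) B ⊆ A := by
  obtain ⟨x, hxm, hxA⟩ := hmem
  intro y hym
  by_contra hyA
  have hrxy : restrained r A x y := hxm.2 y hym.1
  have hryx : restrained r A y x := hym.2 x hxm.1
  have hyNotMin : y ∉ mins r A := fun hmin => hyA hmin.1
  rcases hryx with hmin | ⟨hxNotMin, hrest⟩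
  · exact hyA hmin.1
  · have hsyx : SRel r y x := by
      rcases hrest with hs | ⟨_, hor⟩
      · exact hs
      · rcases hor with h1 | h2
        · exact absurd h1 hyA
        · exact absurd hxA h2
    rcases hrxy with hmin | ⟨_, hrest⟩
    · exact hxNotMin hmin
    · rcases hrest with ⟨h1, _⟩ | ⟨h1, _⟩ <;> exact hsyx.2 h1
end

section
/- A revision operator ∗ satisfying RAGM satisfies (U) (for all ≤ and all nonempty A, B ⊆ V: if min(B, ≤ ∗ A) ∩ A ≠ ∅ then min(B, ≤ ∗ A) ⊆ A) if and only if it satisfies (UR): for all ≤, all nonempty A, and all v ∈ A, w ∉ A, either v < w in ≤ ∗ A or w < v in ≤ ∗ A (every plausibility level of ≤ ∗ A contains only A-worlds or only non-A-worlds). -/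
open Set

variable {V : Type*}

theorem stmt_16 [Fintype V] [Nonempty V]
    (op : (V → V → Prop) → Set V → (V → V → Prop))
    (htp : ∀ r (A : Set V), IsTP r → A.Nonempty → IsTP (op r A))
    (hragm : ∀ r (A : Set V), IsTP r → A.Nonempty →
      mins (op r A) Set.univ = mins r A) :
    ((∀ r (A B : Set V), IsTP r → A.Nonempty → B.Nonempty →
        (mins (op r A) B ∩ A).Nonempty → mins (op r A) B ⊆ A)
      ↔
     (∀ r (A : Set V), IsTP r → A.Nonempty → ∀ v ∈ A, ∀ w ∉ A,
        SRel (op r A) v w ∨ SRel (op r A) w v)) := by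
  constructor
  · intro hU r A htpr hA v hv w hw
    obtain ⟨hrefl, htrans, htot⟩ := htp r A htpr hA
    by_contra hcon
    push_neg at hcon
    obtain ⟨h1, h2⟩ := hcon
    have hvw : op r A v w ∧ op r A w v := by
      rcases htot v w with h | h
      · refine ⟨h, ?_⟩
        by_contra hx
        exact h1 ⟨h, hx⟩
      · refine ⟨?_, h⟩
        by_contra hx
        exact h2 ⟨h, hx⟩
    have hwmin : w ∈ mins (op r A) {v, w} := by
      refine ⟨by simp, ?_⟩
      intro x hx
      simp only [Set.mem_insert_iff, Set.mem_singleton_iff] at hx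
      rcases hx with h | h
      · rw [h]; exact hvw.2
      · rw [h]; exact hrefl w
    have hvmin : v ∈ mins (op r A) {v, w} := by
      refine ⟨by simp, ?_⟩
      intro x hx
      simp only [Set.mem_insert_iff, Set.mem_singleton_iff] at hx
      rcases hx with h | h
      · rw [h]; exact hrefl v
      · rw [h]; exact hvw.1
    exact hw (hU r A {v, w} htpr hA ⟨v, by simp⟩ ⟨v, hvmin, hv⟩ hwmin)
  · intro hUR r A B htpr hA hB hne y hy
    obtain ⟨x, hxmin, hxA⟩ := hne
    by_contra hyA
    rcases hUR r A htpr hA x hxA y hyA with h | h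
    · exact h.2 (hy.2 x hxmin.1)
    · exact h.2 (hxmin.2 y hy.1)
end

section
/- For every total preorder ≤ on V and all nonempty subsets A, B, C ⊆ V: if A ⇝ B with respect to ≤ and (A ∪ C) does not counteract with B with respect to ≤, then min((A ∪ C) ∩ B, ≤) = min(C ∩ B, ≤) (i.e., B(E ∗ ((α ∨ γ) ∧ β)) = B(E ∗ (γ ∧ β)) under RAGM). -/
open Set

variable {V : Type*}

theorem stmt_17 [Fintype V] [Nonempty V] (r : V → V → Prop) (h : IsTP r)
    (A B C : Set V) (hA : A.Nonempty) (hB : B.Nonempty) (hC : C.Nonempty)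
    (hAB : Counter r A B) (hnot : ¬ Counter r (A ∪ C) B) :
    mins r ((A ∪ C) ∩ B) = mins r (C ∩ B) := by
  obtain ⟨hrefl, htrans, htot⟩ := h
  obtain ⟨hAB1, hAB2⟩ := hAB
  rw [Set.eq_empty_iff_forall_notMem] at hAB1 hAB2
  have key : ∃ x, x ∈ C ∩ B ∧ (∀ z ∈ (A ∪ C) ∩ B, r x z) ∧
      (∀ y ∈ A ∩ B, ¬ r y x) := by
    rw [Counter, not_and_or] at hnot
    rcases hnot with hnot | hnot
    · obtain ⟨x, hx⟩ := Set.nonempty_iff_ne_empty.mpr hnot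
      obtain ⟨⟨hxAC, hxmin⟩, hxB⟩ := hx
      have hxC : x ∈ C := by
        rcases hxAC with hxA | hxC
        · exact absurd ⟨⟨hxA, fun a ha => hxmin a (Or.inl ha)⟩, hxB⟩ (hAB1 x)
        · exact hxC
      refine ⟨x, ⟨hxC, hxB⟩, fun z hz => hxmin z hz.1, fun y hy hyx => ?_⟩
      exact hAB1 y ⟨⟨hy.1, fun a ha => htrans hyx (hxmin a (Or.inl ha))⟩, hy.2⟩
    · obtain ⟨x, hx⟩ := Set.nonempty_iff_ne_empty.mpr hnot
      obtain ⟨⟨hxB, hxmin⟩, hxAC⟩ := hx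
      have hxC : x ∈ C := by
        rcases hxAC with hxA | hxC
        · exact absurd ⟨⟨hxB, hxmin⟩, hxA⟩ (hAB2 x)
        · exact hxC
      refine ⟨x, ⟨hxC, hxB⟩, fun z hz => hxmin z hz.2, fun y hy hyx => ?_⟩
      exact hAB2 y ⟨⟨hy.2, fun b hb => htrans hyx (hxmin b hb)⟩, hy.1⟩
  obtain ⟨x, ⟨hxC, hxB⟩, hxmin, hxA⟩ := key
  have hxCB : x ∈ (A ∪ C) ∩ B := ⟨Or.inr hxC, hxB⟩
  have h1 : mins r ((A ∪ C) ∩ B) = {y | y ∈ (A ∪ C) ∩ B ∧ r y x} := by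
    ext y
    constructor
    · rintro ⟨hy, hymin⟩; exact ⟨hy, hymin x hxCB⟩
    · rintro ⟨hy, hyx⟩; exact ⟨hy, fun z hz => htrans hyx (hxmin z hz)⟩
  have h2 : mins r (C ∩ B) = {y | y ∈ C ∩ B ∧ r y x} := by
    ext y
    constructor
    · rintro ⟨hy, hymin⟩; exact ⟨hy, hymin x ⟨hxC, hxB⟩⟩
    · rintro ⟨hy, hyx⟩
      exact ⟨hy, fun z hz => htrans hyx (hxmin z ⟨Or.inr hz.1, hz.2⟩)⟩
  rw [h1, h2]
  ext y
  constructor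
  · rintro ⟨⟨hyAC, hyB⟩, hyx⟩
    rcases hyAC with hyA | hyC
    · exact absurd hyx (hxA y ⟨hyA, hyB⟩)
    · exact ⟨⟨hyC, hyB⟩, hyx⟩
  · rintro ⟨⟨hyC, hyB⟩, hyx⟩
    exact ⟨⟨Or.inr hyC, hyB⟩, hyx⟩
end

section
/- Restrained revision is the composition of Papini's backwards revision with natural revision: for every total preorder ≤ on V and every nonempty A ⊆ V, ≤ ∗ᴿ A = (≤ ◁ A) ⊕ A, where ◁ is the backwards (lexicographic-refinement) operator defined by v (≤ ◁ A) w iff (v < w, or (v ≤ w and (v ∈ A or w ∉ A))), and ⊕ is natural revision, defined by v (≤ ⊕ A) w iff (v ∈ min(A, ≤), or (w ∉ min(A, ≤) and v ≤ w)). -/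
open Set

variable {V : Type*}

/-- Papini's backwards revision: the lexicographic refinement of r by A. -/
def backOp (r : V → V → Prop) (A : Set V) : V → V → Prop :=
  fun v w => SRel r v w ∨ (r v w ∧ (v ∈ A ∨ w ∉ A))

/-- Boutilier's natural revision. -/
def naturalRev (r : V → V → Prop) (A : Set V) : V → V → Prop :=
  fun v w => v ∈ mins r A ∨ (w ∉ mins r A ∧ r v w)

lemma mins_back (r : V → V → Prop) (A : Set V) :
    mins (backOp r A) A = mins r A := by
  ext v
  constructor
  · rintro ⟨hv, hmin⟩
    refine ⟨hv, fun w hw => ?_⟩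
    rcases hmin w hw with h1 | h2
    · exact h1.1
    · exact h2.1
  · rintro ⟨hv, hmin⟩
    exact ⟨hv, fun w hw => Or.inr ⟨hmin w hw, Or.inl hv⟩⟩

theorem stmt_19 [Fintype V] [Nonempty V] (r : V → V → Prop) (h : IsTP r)
    (A : Set V) (hA : A.Nonempty) :
    restrained r A = naturalRev (backOp r A) A := by
  funext v w
  unfold restrained naturalRev
  rw [mins_back]
  rfl
end
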